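/- arXiv:math/0407051 — 5 statements merged into one kernel-verified Lean document; each statement's English description precedes it below -/
import Mathlib

section
/- Let γ ∈ S_n be a non-identity permutation with last descent at position g, and let m > g be the largest index with γ(m) < γ(g). Set γ' = γ ∘ t_{g,m}, where t_{g,m} is the transposition of g and m. Then ℓ(γ') = ℓ(γ) − 1. -/
/-- The diagram of a permutation of `{0,...,n-1}`, encoded as a permutation of `ℕ`
fixing all indices `≥ n` (indices are 0-based). -/
def Diagram (π : Equiv.Perm ℕ) : Set (ℕ × ℕ) :=
  {pq | pq.2 < π pq.1 ∧ pq.1 < π.symm pq.2}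

/-- The Coxeter length of a permutation: the number of inversions. -/
noncomputable def permLength (π : Equiv.Perm ℕ) : ℕ :=
  Set.ncard {ij : ℕ × ℕ | ij.1 < ij.2 ∧ π ij.2 < π ij.1}

/-- Removing the maximal corner: `ℓ(γ t_{g,m}) = ℓ(γ) − 1`. -/
theorem length_transition_step (n : ℕ) (γ : Equiv.Perm ℕ)
    (hγ : ∀ i, n ≤ i → γ i = i) (hne : γ ≠ 1) (g m : ℕ)
    (hg : γ (g + 1) < γ g) (hglast : ∀ k, g < k → γ k ≤ γ (k + 1))
    (hgm : g < m) (hm : γ m < γ g) (hmmax : ∀ k, m < k → γ g ≤ γ k) :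
    permLength γ = permLength (γ * Equiv.swap g m) + 1 := by
  classical
  simp only [permLength]
  set σ : Equiv.Perm ℕ := Equiv.swap g m with hσdef
  have hinj : Function.Injective γ := γ.injective
  have hσg : σ g = m := Equiv.swap_apply_left g m
  have hσm : σ m = g := Equiv.swap_apply_right g m
  have hσo : ∀ i, i ≠ g → i ≠ m → σ i = i := fun i h1 h2 =>
    Equiv.swap_apply_of_ne_of_ne h1 h2
  have hσσ : ∀ i, σ (σ i) = i := fun i => Equiv.swap_apply_self g m i
  have h1 : ∀ k, g < k → γ k < γ (k + 1) := by
    intro k hk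
    refine lt_of_le_of_ne (hglast k hk) fun h => ?_
    have := hinj h; omega
  have hmono : ∀ k l, g < k → k < l → γ k < γ l := by
    intro k l hk hkl
    induction l with
    | zero => omega
    | succ l ih =>
      rcases Nat.lt_or_ge k l with h | h
      · exact (ih h).trans (h1 l (lt_trans hk h))
      · have : k = l := by omega
        subst this
        exact h1 k hk
  set Invγ : Set (ℕ × ℕ) := {ij : ℕ × ℕ | ij.1 < ij.2 ∧ γ ij.2 < γ ij.1} with hInvγ
  set Invγ' : Set (ℕ × ℕ) := {ij : ℕ × ℕ | ij.1 < ij.2 ∧ (γ * σ) ij.2 < (γ * σ) ij.1}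
    with hInvγ'
  set A : Set (ℕ × ℕ) := Invγ \ {(g, m)} with hAdef
  -- finiteness of the inversion set
  have hsmall : ∀ i, i < n → γ i < n := by
    intro i hi
    by_contra hni
    push_neg at hni
    have h2 : γ (γ i) = γ i := hγ _ hni
    have := hinj h2
    omega
  have hfin : Invγ.Finite := by
    apply Set.Finite.subset ((Set.finite_Iio n).prod (Set.finite_Iio n))
    rintro ⟨i, j⟩ ⟨hij, hinv⟩
    simp only [Set.mem_prod, Set.mem_Iio]
    simp only at hij hinv
    have hj : j < n := by
      by_contra hj
      push_neg at hj
      have hγj : γ j = j := hγ j hj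
      rcases Nat.lt_or_ge i n with hi | hi
      · have := hsmall i hi; omega
      · have hγi : γ i = i := hγ i hi
        omega
    exact ⟨lt_trans hij hj, hj⟩
  -- classification of order-reversing pairs for σ
  have hclass : ∀ i j : ℕ, i < j → σ j < σ i →
      (i = g ∧ g < j ∧ j < m) ∨ (i = g ∧ j = m) ∨ (j = m ∧ g < i ∧ i < m) := by
    intro i j hij hflip
    by_cases hig : i = g
    · by_cases hjm : j = m
      · exact Or.inr (Or.inl ⟨hig, hjm⟩)
      · have hjg : j ≠ g := by omega
        rw [hig, hσg, hσo j hjg hjm] at hflip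
        exact Or.inl ⟨hig, by omega, hflip⟩
    · by_cases him : i = m
      · exfalso
        have hjg : j ≠ g := by omega
        have hjm : j ≠ m := by omega
        rw [him, hσm, hσo j hjg hjm] at hflip
        omega
      · rw [hσo i hig him] at hflip
        by_cases hjm : j = m
        · rw [hjm, hσm] at hflip
          exact Or.inr (Or.inr ⟨hjm, hflip, by omega⟩)
        · by_cases hjg : j = g
          · rw [hjg, hσg] at hflip
            omega
          · rw [hσo j hjg hjm] at hflip
            omega
  -- the bijection
  set f : ℕ × ℕ → ℕ × ℕ := fun p => if σ p.1 < σ p.2 then (σ p.1, σ p.2) else p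
    with hfdef
  have hff : ∀ p : ℕ × ℕ, p.1 < p.2 → f (f p) = p := by
    intro p hp
    by_cases h : σ p.1 < σ p.2
    · simp only [hfdef, h, if_true, hσσ, hp, Prod.mk.eta]
    · simp only [hfdef, h, if_false]
  have hmaps : ∀ p ∈ A, f p ∈ Invγ' := by
    rintro ⟨i, j⟩ ⟨⟨hij, hinv⟩, hme⟩
    simp only at hij hinv
    have hnegm : (i, j) ≠ ((g, m) : ℕ × ℕ) := fun h => hme (by simp [h])
    by_cases hlt : σ i < σ j
    · simp only [hfdef, hlt, if_true]
      refine ⟨hlt, ?_⟩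
      simp only [Equiv.Perm.mul_apply, hσσ]
      exact hinv
    · have hne' : σ i ≠ σ j := fun h => by have := σ.injective h; omega
      have hflip : σ j < σ i := lt_of_le_of_ne (not_lt.mp hlt) (Ne.symm hne')
      simp only [hfdef, hlt, if_false]
      rcases hclass i j hij hflip with ⟨hig, hgj, hjm⟩ | ⟨hig, hjm⟩ | ⟨hjm, hgi, him⟩
      · refine ⟨hij, ?_⟩
        simp only [Equiv.Perm.mul_apply]
        rw [hig, hσg, hσo j (by omega) (by omega)]
        exact hmono j m hgj hjm
      · exact absurd (by simp [hig, hjm]) hnegm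
      · exfalso
        have := hmono i m hgi him
        rw [hjm] at hinv
        omega
  have hback : ∀ q ∈ Invγ', f q ∈ A := by
    rintro ⟨i, j⟩ ⟨hij, hinv⟩
    simp only [Equiv.Perm.mul_apply] at hinv
    simp only at hij
    by_cases hlt : σ i < σ j
    · simp only [hfdef, hlt, if_true]
      refine ⟨⟨hlt, hinv⟩, ?_⟩
      simp only [Set.mem_singleton_iff, Prod.mk.injEq, not_and]
      intro hg' hm'
      have hi : i = m := by rw [← hσσ i, hg', hσg]
      have hj : j = g := by rw [← hσσ j, hm', hσm]
      omega
    · have hne' : σ i ≠ σ j := fun h => by have := σ.injective h; omega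
      have hflip : σ j < σ i := lt_of_le_of_ne (not_lt.mp hlt) (Ne.symm hne')
      simp only [hfdef, hlt, if_false]
      rcases hclass i j hij hflip with ⟨hig, hgj, hjm⟩ | ⟨hig, hjm⟩ | ⟨hjm, hgi, him⟩
      · refine ⟨⟨hij, ?_⟩, ?_⟩
        · rw [hig]
          exact lt_trans (hmono j m hgj hjm) hm
        · simp only [Set.mem_singleton_iff, Prod.mk.injEq, not_and]
          intro _; omega
      · rw [hig, hjm, hσg, hσm] at hinv; omega
      · rw [hjm, hσm, hσo i (by omega) (by omega)] at hinv
        have := hmono i m hgi him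
        omega
  have hinjOn : Set.InjOn f A := by
    intro p hp q hq he
    have h1 := hff p hp.1.1
    have h2 := hff q hq.1.1
    rw [← h1, ← h2, he]
  have himg : f '' A = Invγ' := by
    apply Set.Subset.antisymm
    · rintro _ ⟨p, hp, rfl⟩
      exact hmaps p hp
    · intro q hq
      exact ⟨f q, hback q hq, hff q hq.1⟩
  have hgmInv : ((g, m) : ℕ × ℕ) ∈ Invγ := ⟨hgm, hm⟩
  have hInsert : Invγ = insert (g, m) A := by
    rw [hAdef, Set.insert_diff_singleton, Set.insert_eq_of_mem hgmInv]
  have hAfin : A.Finite := hfin.subset Set.diff_subset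
  have hnotmem : ((g, m) : ℕ × ℕ) ∉ A := fun h => h.2 rfl
  have hcard1 : Invγ.ncard = A.ncard + 1 := by
    rw [hInsert, Set.ncard_insert_of_notMem hnotmem hAfin]
  have hcard2 : A.ncard = Invγ'.ncard := by
    rw [← himg, Set.ncard_image_of_injOn hinjOn]
  omega
end

section
/- Let γ ∈ S_n have last descent at position g, let m > g be the largest index with γ(m) < γ(g), and set γ' = γ t_{g,m}. Then the diagram of γ' equals the diagram of γ with the single box (g, γ(m)) removed; in particular D(γ') ⊂ D(γ) and |D(γ)| = |D(γ')| + 1. -/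
/-- The diagram of `γ' = γ t_{g,m}` is the diagram of `γ` with the single box
`(g, γ(m))` removed. -/
theorem diagram_transition_step (n : ℕ) (γ : Equiv.Perm ℕ)
    (hγ : ∀ i, n ≤ i → γ i = i) (hne : γ ≠ 1) (g m : ℕ)
    (hg : γ (g + 1) < γ g) (hglast : ∀ k, g < k → γ k ≤ γ (k + 1))
    (hgm : g < m) (hm : γ m < γ g) (hmmax : ∀ k, m < k → γ g ≤ γ k) :
    Diagram (γ * Equiv.swap g m) = Diagram γ \ {(g, γ m)} ∧
      (g, γ m) ∈ Diagram γ ∧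
      Diagram (γ * Equiv.swap g m) ⊂ Diagram γ ∧
      (Diagram γ).ncard = (Diagram (γ * Equiv.swap g m)).ncard + 1 := by
  have inj : Function.Injective γ := γ.injective
  have mono : ∀ k l, g < k → k ≤ l → γ k ≤ γ l := by
    intro k l hk hkl
    induction l with
    | zero => omega
    | succ l ih =>
      rcases Nat.eq_or_lt_of_le hkl with h | h
      · rw [h]
      · exact le_trans (ih (by omega)) (hglast l (by omega))
  have key1 : ∀ k, g < k → γ k < γ g → γ k ≤ γ m := by
    intro k hk hlt
    rcases le_or_gt k m with h | h
    · exact mono k m hk h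
    · exact absurd (hmmax k h) (by omega)
  have key3 : ∀ k, m < k → γ g < γ k := by
    intro k hk
    refine lt_of_le_of_ne (hmmax k hk) fun h => ?_
    have := inj h
    omega
  have hsymm : ∀ q, (γ * Equiv.swap g m).symm q = Equiv.swap g m (γ.symm q) := by
    intro q; rfl
  have main : ∀ p k : ℕ,
      (γ k < γ (Equiv.swap g m p) ∧ p < Equiv.swap g m k) ↔
        ((γ k < γ p ∧ p < k) ∧ ¬(p = g ∧ k = m)) := by
    intro p k
    rcases eq_or_ne p g with hpg | hpg
    · rw [hpg]
      rcases eq_or_ne k g with hkg | hkg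
      · rw [hkg]
        simp only [Equiv.swap_apply_left]
        constructor
        · rintro ⟨h1, -⟩; omega
        · rintro ⟨⟨h1, -⟩, -⟩; omega
      · rcases eq_or_ne k m with hkm | hkm
        · rw [hkm]
          simp only [Equiv.swap_apply_left, Equiv.swap_apply_right]
          constructor
          · rintro ⟨h1, -⟩; omega
          · rintro ⟨-, h⟩; simp at h
        · rw [Equiv.swap_apply_left, Equiv.swap_apply_of_ne_of_ne hkg hkm]
          have hne' : γ k ≠ γ m := fun h => hkm (inj h)
          constructor
          · rintro ⟨h1, h2⟩; exact ⟨⟨h1.trans hm, h2⟩, fun h => hkm h.2⟩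
          · rintro ⟨⟨h1, h2⟩, -⟩
            exact ⟨lt_of_le_of_ne (key1 k h2 h1) hne', h2⟩
    · rcases eq_or_ne p m with hpm | hpm
      · rw [hpm]
        rcases eq_or_ne k g with hkg | hkg
        · rw [hkg]
          simp only [Equiv.swap_apply_right, Equiv.swap_apply_left]
          constructor
          · rintro ⟨h1, -⟩; omega
          · rintro ⟨⟨h1, -⟩, -⟩; omega
        · rcases eq_or_ne k m with hkm | hkm
          · rw [hkm]
            simp only [Equiv.swap_apply_right]
            constructor
            · rintro ⟨-, h2⟩; omega
            · rintro ⟨⟨h1, -⟩, -⟩; omega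
          · rw [Equiv.swap_apply_right, Equiv.swap_apply_of_ne_of_ne hkg hkm]
            constructor
            · rintro ⟨h1, h2⟩; exact absurd (key3 k h2) (by omega)
            · rintro ⟨⟨h1, h2⟩, -⟩; exact absurd (key3 k h2) (by omega)
      · rw [Equiv.swap_apply_of_ne_of_ne hpg hpm]
        rcases eq_or_ne k g with hkg | hkg
        · rw [hkg, Equiv.swap_apply_left]
          constructor
          · rintro ⟨h1, h2⟩
            refine ⟨⟨h1, ?_⟩, fun h => hpg h.1⟩
            rcases lt_or_ge p g with h | h
            · exact h
            · have hgp : g < p := lt_of_le_of_ne h (Ne.symm hpg)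
              exact absurd (le_trans (mono p m hgp h2.le) hm.le) (by omega)
          · rintro ⟨⟨h1, h2⟩, -⟩; exact ⟨h1, h2.trans hgm⟩
        · rcases eq_or_ne k m with hkm | hkm
          · rw [hkm, Equiv.swap_apply_right]
            constructor
            · rintro ⟨h1, h2⟩; exact ⟨⟨h1, h2.trans hgm⟩, fun h => hpg h.1⟩
            · rintro ⟨⟨h1, h2⟩, -⟩
              refine ⟨h1, ?_⟩
              rcases lt_or_ge p g with h | h
              · exact h
              · have hgp : g < p := lt_of_le_of_ne h (Ne.symm hpg)
                exact absurd (mono p m hgp h2.le) (by omega)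
          · rw [Equiv.swap_apply_of_ne_of_ne hkg hkm]
            constructor
            · rintro ⟨h1, h2⟩; exact ⟨⟨h1, h2⟩, fun h => hpg h.1⟩
            · rintro ⟨⟨h1, h2⟩, -⟩; exact ⟨h1, h2⟩
  have hD : Diagram (γ * Equiv.swap g m) = Diagram γ \ {(g, γ m)} := by
    ext ⟨p, q⟩
    have hq : γ (γ.symm q) = q := γ.apply_symm_apply q
    simp only [Diagram, Set.mem_setOf_eq, Set.mem_diff, Set.mem_singleton_iff,
      Prod.mk.injEq, Equiv.Perm.mul_apply, hsymm]
    rw [← hq, Equiv.symm_apply_apply]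
    constructor
    · intro h
      obtain ⟨⟨h1, h2⟩, h3⟩ := (main p (γ.symm q)).mp h
      exact ⟨⟨h1, h2⟩, fun hc => h3 ⟨hc.1, inj hc.2⟩⟩
    · rintro ⟨⟨h1, h2⟩, h3⟩
      exact (main p (γ.symm q)).mpr ⟨⟨h1, h2⟩, fun hc => h3 ⟨hc.1, by rw [hc.2]⟩⟩
  have hmem : (g, γ m) ∈ Diagram γ := by
    refine ⟨hm, ?_⟩
    show g < γ.symm (γ m)
    rw [Equiv.symm_apply_apply]; exact hgm
  have hfin : (Diagram γ).Finite := by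
    apply Set.Finite.subset ((Set.finite_Iio n).prod (Set.finite_Iio n))
    rintro ⟨p, q⟩ ⟨h1, h2⟩
    replace h1 : q < γ p := h1
    replace h2 : p < γ.symm q := h2
    simp only [Set.mem_prod, Set.mem_Iio]
    have hp : p < n := by
      by_contra h
      push_neg at h
      have hγp : γ p = p := hγ p h
      have heq : γ (γ.symm q) = γ.symm q := hγ (γ.symm q) (by omega)
      have : q = γ.symm q := by
        conv_lhs => rw [← γ.apply_symm_apply q]
        rw [heq]
      omega
    refine ⟨hp, ?_⟩
    have : γ p < n := by
      by_contra h
      push_neg at h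
      have := hγ (γ p) h
      have := inj this
      omega
    omega
  refine ⟨hD, hmem, ?_, ?_⟩
  · rw [hD]
    constructor
    · exact Set.diff_subset
    · intro hsub
      exact absurd (hsub hmem) (by simp)
  · rw [hD]
    exact (Set.ncard_diff_singleton_add_one hmem hfin).symm
end

section
/- Let γ ∈ S_n be a non-identity permutation with last descent at position g, and let m > g be the largest index with γ(m) < γ(g). Then the box (g, γ(m)) belongs to D(γ), and it is the southeast-most box of D(γ): every (p,q) ∈ D(γ) satisfies p < g, or (p = g and q ≤ γ(m)). -/
/-- The box `(g, γ(m))` is the southeast-most box of the diagram. -/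
theorem maximal_corner_is_max (n : ℕ) (γ : Equiv.Perm ℕ)
    (hγ : ∀ i, n ≤ i → γ i = i) (hne : γ ≠ 1) (g m : ℕ)
    (hg : γ (g + 1) < γ g) (hglast : ∀ k, g < k → γ k ≤ γ (k + 1))
    (hgm : g < m) (hm : γ m < γ g) (hmmax : ∀ k, m < k → γ g ≤ γ k) :
    (g, γ m) ∈ Diagram γ ∧
      ∀ p q : ℕ, (p, q) ∈ Diagram γ → p < g ∨ (p = g ∧ q ≤ γ m) := by
  -- γ is monotone on indices > g
  have mono : ∀ k l, g < k → k ≤ l → γ k ≤ γ l := by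
    intro k l hk hkl
    induction l with
    | zero => omega
    | succ l ih =>
      rcases Nat.lt_or_ge k (l + 1) with h | h
      · exact le_trans (ih (by omega)) (hglast l (by omega))
      · have : k = l + 1 := by omega
        simp [this]
  have smono : ∀ k l, g < k → k < l → γ k < γ l := by
    intro k l hk hkl
    have h := mono k l hk (le_of_lt hkl)
    rcases lt_or_eq_of_le h with h | h
    · exact h
    · exact absurd (γ.injective h) (by omega)
  constructor
  · constructor
    · exact hm
    · simpa using hgm
  · rintro p q ⟨h1, h2⟩
    simp only at h1 h2
    set r := γ.symm q with hr
    have hq : γ r = q := γ.apply_symm_apply q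
    rcases Nat.lt_or_ge p g with h | h
    · exact Or.inl h
    rcases lt_or_eq_of_le h with h | h
    · -- p > g impossible
      exfalso
      have := smono p r h h2
      omega
    · right
      refine ⟨h.symm, ?_⟩
      -- r > p = g, γ r = q < γ p = γ g
      have hrg : g < r := h ▸ h2
      rcases Nat.lt_or_ge m r with hcase | hcase
      · have := hmmax r hcase
        rw [hq] at this
        rw [← h] at h1
        omega
      · rcases lt_or_eq_of_le hcase with hc | hc
        · have := smono r m hrg hc
          omega
        · rw [← hc, hq]
end

section
/- Let γ ∈ S_n have last descent g and suppose i < g is a pivot row, i.e. γ(i) < γ(m) where m > g is largest with γ(m) < γ(g), and no b with i < b < g satisfies γ(i) < γ(b) < γ(m). Set γ' = γ t_{g,m} and ρ = γ' t_{i,g}. Then ℓ(ρ) = ℓ(γ), i.e. the transition step γ → γ' t_{i,g} preserves length. -/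
private def invSet (π : Equiv.Perm ℕ) : Set (ℕ × ℕ) :=
  {ij | ij.1 < ij.2 ∧ π ij.2 < π ij.1}

private lemma invSet_finite (π : Equiv.Perm ℕ) (N : ℕ) (hfix : ∀ j, N ≤ j → π j = j) :
    (invSet π).Finite := by
  have hlt : ∀ j, j < N → π j < N := by
    intro j hj
    by_contra h
    have h1 : π (π j) = π j := hfix _ (not_lt.mp h)
    have h2 := π.injective h1
    omega
  apply Set.Finite.subset ((Set.finite_Iio N).prod (Set.finite_Iio N))
  rintro ⟨x, y⟩ ⟨hxy, hinv⟩
  have hy : y < N := by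
    by_contra hy
    push_neg at hy
    have hyy : π y = y := hfix y hy
    rcases lt_or_ge x N with hx | hx
    · have := hlt x hx; simp only at hinv; omega
    · have := hfix x hx; simp only at hinv; omega
  exact ⟨lt_trans hxy hy, hy⟩

private lemma swap_apply_lt {a x y : ℕ} (hxy : x < y) (hne : ¬(x = a ∧ y = a + 1)) :
    Equiv.swap a (a+1) x < Equiv.swap a (a+1) y := by
  simp only [Equiv.swap_apply_def]
  split_ifs <;> omega

private lemma adjLen (π : Equiv.Perm ℕ) (hfin : (invSet π).Finite) (a : ℕ)
    (h : π a < π (a+1)) :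
    permLength (π * Equiv.swap a (a+1)) = permLength π + 1 := by
  set s := Equiv.swap a (a+1) with hs
  have hset : invSet (π * s) = insert (a, a+1) ((fun p : ℕ×ℕ => (s p.1, s p.2)) '' invSet π) := by
    ext ⟨x, y⟩
    simp only [invSet, Set.mem_setOf_eq, Set.mem_insert_iff, Set.mem_image, Prod.mk.injEq,
      Equiv.Perm.mul_apply]
    constructor
    · rintro ⟨hxy, hinv⟩
      by_cases hp : x = a ∧ y = a + 1
      · exact Or.inl hp
      · refine Or.inr ⟨(s x, s y), ⟨swap_apply_lt hxy hp, by
          simpa [hs, Equiv.swap_apply_self] using hinv⟩, by simp [hs], by simp [hs]⟩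
    · rintro (⟨rfl, rfl⟩ | ⟨⟨u, v⟩, ⟨huv, hinv⟩, hx, hy⟩)
      · constructor
        · omega
        · rw [hs]; rw [Equiv.swap_apply_left, Equiv.swap_apply_right]; exact h
      · subst hx; subst hy
        have hne : ¬(u = a ∧ v = a + 1) := by
          rintro ⟨rfl, rfl⟩; simp only at hinv; omega
        refine ⟨swap_apply_lt huv hne, ?_⟩
        simpa [hs, Equiv.swap_apply_self] using hinv
  have hinj : Function.Injective (fun p : ℕ×ℕ => (s p.1, s p.2)) := by
    intro p q hpq
    simp only [Prod.mk.injEq] at hpq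
    exact Prod.ext (s.injective hpq.1) (s.injective hpq.2)
  have hnot : (a, a+1) ∉ (fun p : ℕ×ℕ => (s p.1, s p.2)) '' invSet π := by
    rintro ⟨⟨u, v⟩, ⟨huv, _⟩, heq⟩
    simp only [Prod.mk.injEq] at heq
    have hu : u = a + 1 := by
      have := congrArg s heq.1
      simpa [hs, Equiv.swap_apply_self, Equiv.swap_apply_left] using this
    have hv : v = a := by
      have := congrArg s heq.2
      simpa [hs, Equiv.swap_apply_self, Equiv.swap_apply_right] using this
    omega
  show Set.ncard (invSet (π * s)) = Set.ncard (invSet π) + 1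
  rw [hset, Set.ncard_insert_of_notMem hnot (hfin.image _),
    Set.ncard_image_of_injective _ hinj]

private lemma keyLen (N : ℕ) (d : ℕ) : ∀ (π : Equiv.Perm ℕ) (a : ℕ),
    (∀ j, N ≤ j → π j = j) → a + d + 1 < N → π a < π (a + d + 1) →
    (∀ k, a < k → k < a + d + 1 → π k < π a ∨ π (a + d + 1) < π k) →
    permLength (π * Equiv.swap a (a + d + 1)) = permLength π + 1 := by
  induction d with
  | zero => exact fun π a hfix _ hv _ => adjLen π (invSet_finite π N hfix) a hv
  | succ e IH =>
    intro π a hfix hb hv hmid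
    set b := a + (e + 1) + 1 with hbdef
    set s1 := Equiv.swap a (a+1) with hs1
    set s2 := Equiv.swap (a+1) b with hs2
    have hswap : s1 * s2 * s1 = Equiv.swap a b := by
      apply Equiv.ext; intro x
      simp only [hs1, hs2, Equiv.Perm.mul_apply, Equiv.swap_apply_def]
      split_ifs <;> omega
    have hπs : π * Equiv.swap a b = ((π * s1) * s2) * s1 := by
      rw [← hswap]; group
    set π1 := π * s1 with hπ1
    have hfix1 : ∀ j, N ≤ j → π1 j = j := by
      intro j hj
      have h1 : s1 j = j := by
        rw [hs1]; exact Equiv.swap_apply_of_ne_of_ne (by omega) (by omega)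
      simp only [hπ1, Equiv.Perm.mul_apply, h1]; exact hfix j hj
    have hπ1a : π1 a = π (a+1) := by
      simp [hπ1, hs1, Equiv.Perm.mul_apply]
    have hπ1a1 : π1 (a+1) = π a := by
      simp [hπ1, hs1, Equiv.Perm.mul_apply]
    have hπ1k : ∀ k, a + 1 < k → π1 k = π k := by
      intro k hk
      simp only [hπ1, Equiv.Perm.mul_apply, hs1,
        Equiv.swap_apply_of_ne_of_ne (by omega : k ≠ a) (by omega : k ≠ a+1)]
    have hb1 : π1 b = π b := hπ1k b (by omega)
    have hbe : (a + 1) + e + 1 = b := by omega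
    set π2 := π1 * s2 with hπ2
    have hstep2 : permLength π2 = permLength π1 + 1 := by
      have := IH π1 (a+1) hfix1 (by omega) (by rw [hπ1a1, hbe, hb1]; exact hv)
        (by intro k hk1 hk2
            rw [hπ1a1, hbe, hb1, hπ1k k hk1]
            exact hmid k (by omega) (by omega))
      rw [hbe] at this
      exact this
    have hfix2 : ∀ j, N ≤ j → π2 j = j := by
      intro j hj
      have h1 : s2 j = j := by
        rw [hs2]; exact Equiv.swap_apply_of_ne_of_ne (by omega) (by omega)
      simp only [hπ2, Equiv.Perm.mul_apply, h1]; exact hfix1 j hj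
    have hπ2a : π2 a = π (a+1) := by
      have h1 : s2 a = a := by
        rw [hs2]; exact Equiv.swap_apply_of_ne_of_ne (by omega) (by omega)
      simp only [hπ2, Equiv.Perm.mul_apply, h1, hπ1a]
    have hπ2a1 : π2 (a+1) = π b := by
      simp only [hπ2, Equiv.Perm.mul_apply, hs2, Equiv.swap_apply_left, hb1]
    have hgoal : π * Equiv.swap a b = π2 * s1 := by
      rw [hπs, hπ2, hπ1]
    rcases hmid (a+1) (by omega) (by omega) with hA | hB
    · -- π (a+1) < π a
      have hstep1 : permLength π = permLength π1 + 1 := by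
        have := adjLen π1 (invSet_finite π1 N hfix1) a (by rw [hπ1a, hπ1a1]; exact hA)
        rw [hπ1, mul_assoc, ← hs1, Equiv.swap_mul_self, mul_one] at this
        rw [← hπ1] at this
        exact this
      have hstep3 : permLength (π2 * s1) = permLength π2 + 1 := by
        apply adjLen π2 (invSet_finite π2 N hfix2) a
        rw [hπ2a, hπ2a1]; exact lt_trans hA hv
      rw [hgoal]; omega
    · -- π b < π (a+1)
      have hstep1 : permLength π1 = permLength π + 1 := by
        have := adjLen π (invSet_finite π N hfix) a (lt_trans hv hB)
        rw [← hs1, ← hπ1] at this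
        exact this
      set π3 := π2 * s1 with hπ3
      have hfix3 : ∀ j, N ≤ j → π3 j = j := by
        intro j hj
        have h1 : s1 j = j := by
          rw [hs1]; exact Equiv.swap_apply_of_ne_of_ne (by omega) (by omega)
        simp only [hπ3, Equiv.Perm.mul_apply, h1]; exact hfix2 j hj
      have hπ3a : π3 a = π b := by
        simp only [hπ3, Equiv.Perm.mul_apply, hs1, Equiv.swap_apply_left, hπ2a1]
      have hπ3a1 : π3 (a+1) = π (a+1) := by
        simp only [hπ3, Equiv.Perm.mul_apply, hs1, Equiv.swap_apply_right, hπ2a]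
      have hstep3 : permLength π2 = permLength π3 + 1 := by
        have := adjLen π3 (invSet_finite π3 N hfix3) a (by rw [hπ3a, hπ3a1]; exact hB)
        have h4 : π3 * Equiv.swap a (a+1) = π2 := by
          rw [hπ3, mul_assoc, hs1, Equiv.swap_mul_self, mul_one]
        rw [h4] at this
        exact this
      rw [hgoal]; omega

private lemma keyLen' (N : ℕ) (π : Equiv.Perm ℕ) (hfix : ∀ j, N ≤ j → π j = j)
    (a b : ℕ) (hab : a < b) (hbN : b < N) (hv : π a < π b)
    (hmid : ∀ k, a < k → k < b → π k < π a ∨ π b < π k) :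
    permLength (π * Equiv.swap a b) = permLength π + 1 := by
  obtain ⟨d, rfl⟩ : ∃ d, b = a + d + 1 := ⟨b - a - 1, by omega⟩
  exact keyLen N d π a hfix hbN hv hmid

/-- Row \`i\` is a pivot row for the maximal corner \`(g, γ(m))\`: the dot \`(i, γ(i))\`
is northwest of the corner and the rectangle between them contains no other dot. -/
def IsPivotRow (γ : Equiv.Perm ℕ) (g m i : ℕ) : Prop :=
  i < g ∧ γ i < γ m ∧ ¬ ∃ b, i < b ∧ b < g ∧ γ i < γ b ∧ γ b < γ m

/-- A transition step towards a pivot preserves length: `ℓ(γ t_{g,m} t_{i,g}) = ℓ(γ)`. -/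
theorem length_transition_pivot (n : ℕ) (γ : Equiv.Perm ℕ)
    (hγ : ∀ i, n ≤ i → γ i = i) (hne : γ ≠ 1) (g m : ℕ)
    (hg : γ (g + 1) < γ g) (hglast : ∀ k, g < k → γ k ≤ γ (k + 1))
    (hgm : g < m) (hm : γ m < γ g) (hmmax : ∀ k, m < k → γ g ≤ γ k)
    (i : ℕ) (hpiv : IsPivotRow γ g m i) :
    permLength ((γ * Equiv.swap g m) * Equiv.swap i g) = permLength γ := by
  obtain ⟨hig, hiv, hnb⟩ := hpiv
  have hgn : g < n := by
    by_contra hgn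
    push_neg at hgn
    have h1 := hγ g hgn
    have h2 := hγ (g+1) (by omega)
    omega
  have himg : ∀ x, x < n → γ x < n := by
    intro x hx
    by_contra h
    have h1 : γ (γ x) = γ x := hγ (γ x) (not_lt.mp h)
    have h2 := γ.injective h1
    omega
  have hmn : m < n := by
    by_contra h
    push_neg at h
    have h1 := hγ m h
    have h2 := himg g hgn
    omega
  have hmono : ∀ k l, g < k → k ≤ l → γ k ≤ γ l := by
    intro k l hk hkl
    induction l, hkl using Nat.le_induction with
    | base => exact le_refl _
    | succ l hl ih => exact le_trans ih (hglast l (lt_of_lt_of_le hk hl))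
  set γ' := γ * Equiv.swap g m with hγ'def
  have hfix' : ∀ j, n ≤ j → γ' j = j := by
    intro j hj
    have h1 : Equiv.swap g m j = j :=
      Equiv.swap_apply_of_ne_of_ne (by omega) (by omega)
    simp only [hγ'def, Equiv.Perm.mul_apply, h1]
    exact hγ j hj
  have hγ'g : γ' g = γ m := by
    simp [hγ'def, Equiv.Perm.mul_apply]
  have hγ'm : γ' m = γ g := by
    simp [hγ'def, Equiv.Perm.mul_apply]
  have hγ'k : ∀ k, k ≠ g → k ≠ m → γ' k = γ k := by
    intro k h1 h2
    simp only [hγ'def, Equiv.Perm.mul_apply, Equiv.swap_apply_of_ne_of_ne h1 h2]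
  -- Step 1: ℓ(γ) = ℓ(γ') + 1
  have hstep1 : permLength γ = permLength γ' + 1 := by
    have := keyLen' n γ' hfix' g m hgm hmn (by rw [hγ'g, hγ'm]; exact hm)
      (by intro k hk1 hk2
          rw [hγ'g, hγ'k k (by omega) (by omega)]
          left
          have h1 : γ k ≤ γ m := hmono k m hk1 (le_of_lt hk2)
          have h2 : γ k ≠ γ m := fun h => by
            have := γ.injective h; omega
          omega)
    have h3 : γ' * Equiv.swap g m = γ := by
      rw [hγ'def, mul_assoc, Equiv.swap_mul_self, mul_one]
    rw [h3] at this
    exact this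
  -- Step 2: ℓ(γ' * swap i g) = ℓ(γ') + 1
  have hstep2 : permLength (γ' * Equiv.swap i g) = permLength γ' + 1 := by
    apply keyLen' n γ' hfix' i g hig hgn
    · rw [hγ'g, hγ'k i (by omega) (by omega)]
      exact hiv
    · intro k hk1 hk2
      rw [hγ'g, hγ'k i (by omega) (by omega), hγ'k k (by omega) (by omega)]
      rcases lt_trichotomy (γ k) (γ i) with h | h | h
      · exact Or.inl h
      · exact absurd (γ.injective h) (by omega)
      · rcases lt_trichotomy (γ k) (γ m) with h2 | h2 | h2
        · exact absurd ⟨k, hk1, hk2, h, h2⟩ hnb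
        · exact absurd (γ.injective h2) (by omega)
        · exact Or.inr h2
  omega
end

section
/- Let γ ∈ S_n be a non-identity permutation with last descent g, and suppose the maximal corner (g, γ(m)) of D(γ) has no pivots (no i < g with γ(i) < γ(m)). Then the connected component of D(γ) containing (g, γ(m)) also contains the box (1,1); in particular (p, q) ∈ D(γ) for all 1 ≤ p ≤ g and 1 ≤ q ≤ γ(m). -/
/-- If the maximal corner has no pivots, its connected component contains the whole
rectangle of boxes `(p, q)` with `p ≤ g` and `q ≤ γ(m)`, including `(0,0)`. -/
theorem no_pivot_component (n : ℕ) (γ : Equiv.Perm ℕ)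
    (hγ : ∀ i, n ≤ i → γ i = i) (hne : γ ≠ 1) (g m : ℕ)
    (hg : γ (g + 1) < γ g) (hglast : ∀ k, g < k → γ k ≤ γ (k + 1))
    (hgm : g < m) (hm : γ m < γ g) (hmmax : ∀ k, m < k → γ g ≤ γ k)
    (hnopivot : ¬ ∃ i, i < g ∧ γ i < γ m) :
    ∀ p q : ℕ, p ≤ g → q ≤ γ m → (p, q) ∈ Diagram γ := by
  push_neg at hnopivot
  have key : ∀ i, i ≤ g → γ m < γ i := by
    intro i hi
    rcases lt_or_eq_of_le hi with h | h
    · have h1 := hnopivot i h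
      rcases lt_or_eq_of_le h1 with h2 | h2
      · exact h2
      · have : m = i := γ.injective h2
        omega
    · rw [h]; exact hm
  intro p q hp hq
  constructor
  · exact lt_of_le_of_lt hq (key p hp)
  · by_contra h
    push_neg at h
    have h2 := key (γ.symm q) (le_trans h hp)
    rw [Equiv.apply_symm_apply] at h2
    omega
end
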